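/- For any non-equality congruence ~ on the additive monoid of natural numbers with index m (the least natural number m such that m ~ x for some x ≠ m) and period q (the least q ≥ 1 with m ~ m+q), one has x ~ y if and only if either x = y < m, or both x, y ≥ m and x ≡ y (mod q). -/

import Mathlib

/-!
Translating a relation `x ∼ x + p` upwards along `ℕ` (add the same number to both sides) shows
that `m ∼ m + q` makes `∼` contain congruence mod `q` above `m`. Conversely, if `x ∼ x + d` for any
`x`, then going up by multiples of `q` and back gives `m ∼ m + d`, hence `m ∼ m + d % q`; the
minimality of `q` forces `d % q = 0`. Below `m` the congruence is trivial by minimality of `m`.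
-/

namespace AddCon

variable {c : AddCon ℕ}

theorem rel_add_of_le {x y p : ℕ} (h : c x (x + p)) (hxy : x ≤ y) : c y (y + p) := by
  obtain ⟨t, rfl⟩ := Nat.exists_eq_add_of_le hxy
  simpa only [Nat.add_right_comm x p t] using c.add h (c.refl t)

theorem rel_add_mul_of_le {x y p : ℕ} (h : c x (x + p)) (hxy : x ≤ y) (k : ℕ) :
    c y (y + k * p) := by
  induction k with
  | zero => simpa using c.refl y
  | succ k ih =>
    have hstep := rel_add_of_le h (hxy.trans (Nat.le_add_right y (k * p)))
    simpa only [Nat.succ_mul, Nat.add_assoc] using c.trans ih hstep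

theorem rel_of_modEq {m p x y : ℕ} (h : c m (m + p)) (hx : m ≤ x) (hy : m ≤ y)
    (hxy : x ≡ y [MOD p]) : c x y := by
  wlog hle : x ≤ y generalizing x y
  · exact c.symm (this hy hx hxy.symm (le_of_not_ge hle))
  obtain ⟨k, hk⟩ := (Nat.modEq_iff_dvd' hle).1 hxy
  have hy_eq : y = x + k * p := by rw [Nat.mul_comm]; omega
  exact hy_eq ▸ rel_add_mul_of_le h hx k

theorem dvd_of_rel_add {m q x d : ℕ} (hq : 0 < q) (hcq : c m (m + q))
    (hq_min : ∀ q', 0 < q' → c m (m + q') → q ≤ q') (h : c x (x + d)) :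
    q ∣ d := by
  have hup : c m (m + x * q) := rel_add_mul_of_le hcq le_rfl x
  have hx_le : x ≤ m + x * q := le_add_left (Nat.le_mul_of_pos_right x hq)
  have hd_up : c (m + x * q) (m + x * q + d) := rel_add_of_le h hx_le
  have hd_back : c (m + d) (m + d + x * q) := rel_add_mul_of_le hcq (Nat.le_add_right m d) x
  have hmd : c m (m + d) :=
    c.trans (c.trans hup hd_up) (by rw [Nat.add_right_comm]; exact c.symm hd_back)
  have hmod_back : c (m + d % q) (m + d) := by
    have := rel_add_mul_of_le hcq (Nat.le_add_right m (d % q)) (d / q)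
    rwa [Nat.add_assoc, Nat.mod_add_div' d q] at this
  have hmod : c m (m + d % q) := c.trans hmd (c.symm hmod_back)
  refine Nat.dvd_of_mod_eq_zero (Nat.eq_zero_of_not_pos fun hpos => ?_)
  exact absurd (hq_min _ hpos hmod) (not_le_of_gt (Nat.mod_lt d hq))

theorem modEq_of_rel {m q x y : ℕ} (hq : 0 < q) (hcq : c m (m + q))
    (hq_min : ∀ q', 0 < q' → c m (m + q') → q ≤ q') (h : c x y) :
    x ≡ y [MOD q] := by
  wlog hle : x ≤ y generalizing x y
  · exact (this (c.symm h) (le_of_not_ge hle)).symm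
  obtain ⟨d, rfl⟩ := Nat.exists_eq_add_of_le hle
  exact (Nat.modEq_iff_dvd' hle).2 (by simpa using dvd_of_rel_add hq hcq hq_min h)

end AddCon

theorem frobenius_congruence_description_general
    (c : AddCon ℕ)
    (m q : ℕ)
    (hm_min : ∀ m' : ℕ, (∃ x, x ≠ m' ∧ c m' x) → m ≤ m')
    (hq : 1 ≤ q) (hcq : c m (m + q))
    (hq_min : ∀ q' : ℕ, 1 ≤ q' → c m (m + q') → q ≤ q') :
    ∀ x y : ℕ, c x y ↔ ((x = y ∧ x < m) ∨ (m ≤ x ∧ m ≤ y ∧ x ≡ y [MOD q])) := by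
  intro x y
  constructor
  · intro h
    rcases eq_or_ne x y with rfl | hxy
    · rcases lt_or_ge x m with hxm | hmx
      · exact Or.inl ⟨rfl, hxm⟩
      · exact Or.inr ⟨hmx, hmx, Nat.ModEq.refl x⟩
    · have hx : m ≤ x := hm_min x ⟨y, hxy.symm, h⟩
      have hy : m ≤ y := hm_min y ⟨x, hxy, c.symm h⟩
      exact Or.inr ⟨hx, hy, AddCon.modEq_of_rel hq hcq hq_min h⟩
  · rintro (⟨rfl, -⟩ | ⟨hx, hy, hxy⟩)
    · exact c.refl x
    · exact AddCon.rel_of_modEq hcq hx hy hxy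

/-- For any non-equality congruence `c` on the additive monoid `ℕ`,
with index `m` (the least natural number related to some distinct element) and period `q`
(the least `q ≥ 1` with `m ∼ m + q`), one has `x ∼ y` iff either `x = y < m`, or
`x, y ≥ m` and `x ≡ y (mod q)`. -/
theorem frobenius_congruence_description
    (c : AddCon ℕ) (hne : ∃ x y : ℕ, x ≠ y ∧ c x y)
    (m q : ℕ)
    (hm : ∃ x, x ≠ m ∧ c m x)
    (hm_min : ∀ m' : ℕ, (∃ x, x ≠ m' ∧ c m' x) → m ≤ m')
    (hq : 1 ≤ q) (hcq : c m (m + q))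
    (hq_min : ∀ q' : ℕ, 1 ≤ q' → c m (m + q') → q ≤ q') :
    ∀ x y : ℕ, c x y ↔ ((x = y ∧ x < m) ∨ (m ≤ x ∧ m ≤ y ∧ x ≡ y [MOD q])) :=
  frobenius_congruence_description_general c m q hm_min hq hcq hq_min
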